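/- The signed Roman domination number of the Kneser graph K_{10,2} equals 4, i.e. γ_sR(K_{10,2}) = 4. -/

import Mathlib

def kneserGraph (n k : ℕ) : SimpleGraph {s : Finset (Fin n) // s.card = k} where
  Adj a b := a ≠ b ∧ Disjoint a.1 b.1
  symm := ⟨fun a b h => ⟨h.1.symm, h.2.symm⟩⟩
  loopless := ⟨fun a h => h.1 rfl⟩

def IsRDF {V : Type*} (G : SimpleGraph V) (f : V → ℕ) : Prop :=
  (∀ v, f v ≤ 2) ∧ ∀ v, f v = 0 → ∃ u, G.Adj v u ∧ f u = 2

noncomputable def romanDomNum {V : Type*} [Fintype V] (G : SimpleGraph V) : ℕ :=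
  sInf {w | ∃ f, IsRDF G f ∧ ∑ v, f v = w}

open Classical in
def IsTRDF {V : Type*} [Fintype V] (G : SimpleGraph V) (f : V → ℕ) : Prop :=
  IsRDF G f ∧ ∀ v, 1 ≤ ∑ u ∈ Finset.univ.filter (fun u => G.Adj v u), f u

noncomputable def totalRomanDomNum {V : Type*} [Fintype V] (G : SimpleGraph V) : ℕ :=
  sInf {w | ∃ f, IsTRDF G f ∧ ∑ v, f v = w}

open Classical in
def IsSRDF {V : Type*} [Fintype V] (G : SimpleGraph V) (f : V → ℤ) : Prop :=
  (∀ v, f v = -1 ∨ f v = 1 ∨ f v = 2) ∧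
  (∀ v, f v = -1 → ∃ u, G.Adj v u ∧ f u = 2) ∧
  (∀ v, 1 ≤ f v + ∑ u ∈ Finset.univ.filter (fun u => G.Adj v u), f u)

noncomputable def signedRomanDomNum {V : Type*} [Fintype V] (G : SimpleGraph V) : ℤ :=
  sInf {w | ∃ f, IsSRDF G f ∧ ∑ v, f v = w}

def IsDominatingSet {V : Type*} (G : SimpleGraph V) (S : Finset V) : Prop :=
  ∀ v, v ∉ S → ∃ u ∈ S, G.Adj v u

noncomputable def domNum {V : Type*} [Fintype V] (G : SimpleGraph V) : ℕ :=
  sInf {m | ∃ S : Finset V, IsDominatingSet G S ∧ S.card = m}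



/-!
Read a vertex `{i, j}` of `K(n, 2)` as an edge of `Kₙ`, and for `f` of weight `W` let `s i` be the
sum of `f` over the pairs containing `i`, so that `∑ i, s i = 2 W`. The vertices outside the closed
neighbourhood of `{i, j}` are the other pairs meeting it, so the neighbourhood condition at `{i, j}`
reads `s i + s j ≤ W - 1 + 2 f {i, j}`. For `n = 10`, summing over `j` gives `6 s i ≤ 7 W - 9`,
hence `W > 0`. If `W ≤ 3`, pick `i` with `s i = M` maximal: then `0 < M ≤ 2`, so at least four `j`
have `f {i, j} = -1`, each with `s j ≤ -M`; thus `2 W ≤ 2 M`, against `6 M ≤ 7 W - 9`.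
-/

open Finset

instance (n k : ℕ) : DecidableRel (kneserGraph n k).Adj :=
  fun a b => inferInstanceAs (Decidable (a ≠ b ∧ Disjoint a.1 b.1))

theorem isSRDF_iff_neighborFinset {V : Type*} [Fintype V] (G : SimpleGraph V) [DecidableRel G.Adj]
    (f : V → ℤ) :
    IsSRDF G f ↔ (∀ v, f v = -1 ∨ f v = 1 ∨ f v = 2) ∧
      (∀ v, f v = -1 → ∃ u, G.Adj v u ∧ f u = 2) ∧
      ∀ v, 1 ≤ f v + ∑ u ∈ G.neighborFinset v, f u := by
  simp only [IsSRDF, SimpleGraph.neighborFinset_eq_filter]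
  convert Iff.rfl

section StarSum

variable {n k : ℕ}

def starSum (f : {s : Finset (Fin n) // s.card = k} → ℤ) (i : Fin n) : ℤ :=
  ∑ v, if i ∈ v.1 then f v else 0

theorem sum_starSum (f : {s : Finset (Fin n) // s.card = k} → ℤ) :
    ∑ i, starSum f i = k * ∑ v, f v := by
  simp only [starSum]
  rw [sum_comm, mul_sum]
  refine sum_congr rfl fun v _ => ?_
  rw [sum_ite_mem univ v.1 (fun _ => f v), univ_inter, sum_const, v.2, nsmul_eq_mul]

end StarSum

section Pairs

variable {n : ℕ} {i j : Fin n}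

def pairVertex (h : i ≠ j) : {s : Finset (Fin n) // s.card = 2} := ⟨{i, j}, card_pair h⟩

def pairValue (f : {s : Finset (Fin n) // s.card = 2} → ℤ) (i j : Fin n) : ℤ :=
  if h : i = j then 0 else f (pairVertex h)

@[simp]
theorem pairValue_self (f : {s : Finset (Fin n) // s.card = 2} → ℤ) (i : Fin n) :
    pairValue f i i = 0 :=
  dif_pos rfl

theorem eq_pairVertex_iff (h : i ≠ j) (u : {s : Finset (Fin n) // s.card = 2}) :
    u = pairVertex h ↔ i ∈ u.1 ∧ j ∈ u.1 := by
  refine ⟨fun hu => by simp [hu, pairVertex], fun ⟨hi, hj⟩ => Subtype.ext ?_⟩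
  exact (eq_of_subset_of_card_le (insert_subset hi (singleton_subset_iff.2 hj))
    (by rw [u.2, card_pair h])).symm

theorem exists_eq_pairVertex (u : {s : Finset (Fin n) // s.card = 2}) :
    ∃ (i j : Fin n) (h : i ≠ j), u = pairVertex h := by
  obtain ⟨i, j, h, hu⟩ := card_eq_two.1 u.2
  exact ⟨i, j, h, Subtype.ext hu⟩

theorem kneserGraph_adj_pairVertex_iff (h : i ≠ j) (u : {s : Finset (Fin n) // s.card = 2}) :
    (kneserGraph n 2).Adj (pairVertex h) u ↔ i ∉ u.1 ∧ j ∉ u.1 := by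
  simp only [kneserGraph, pairVertex, disjoint_insert_left, disjoint_singleton_left]
  refine ⟨fun h => h.2, fun hu => ⟨fun he => hu.1 ?_, hu⟩⟩
  simp [← he]

theorem starSum_eq_sum_pairValue (f : {s : Finset (Fin n) // s.card = 2} → ℤ) (i : Fin n) :
    starSum f i = ∑ j, pairValue f i j := by
  have hpair : ∀ j, pairValue f i j = ∑ v, if i ∈ v.1 ∧ j ∈ v.1.erase i then f v else 0 := by
    intro j
    by_cases hij : i = j
    · simp [pairValue, hij]
    · have hmem : ∀ v : {s : Finset (Fin n) // s.card = 2},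
          i ∈ v.1 ∧ j ∈ v.1.erase i ↔ v = pairVertex hij := fun v => by
        rw [eq_pairVertex_iff, mem_erase]
        exact ⟨fun h => ⟨h.1, h.2.2⟩, fun h => ⟨h.1, Ne.symm hij, h.2⟩⟩
      simp only [pairValue, dif_neg hij, hmem, sum_ite_eq', mem_univ, if_true]
  simp only [hpair, starSum]
  rw [sum_comm]
  refine sum_congr rfl fun v _ => ?_
  split_ifs with hi
  · simp only [hi, true_and]
    rw [sum_ite_mem univ _ (fun _ => f v), univ_inter, sum_const, card_erase_of_mem hi, v.2]
    simp
  · simp [hi]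

theorem closedNbhd_sum_pairVertex (f : {s : Finset (Fin n) // s.card = 2} → ℤ) (h : i ≠ j) :
    f (pairVertex h) + ∑ u ∈ (kneserGraph n 2).neighborFinset (pairVertex h), f u =
      ∑ u, f u - starSum f i - starSum f j + 2 * f (pairVertex h) := by
  have key : ∀ u, (if (kneserGraph n 2).Adj (pairVertex h) u then f u else 0) +
      (if u = pairVertex h then f u else 0) = f u - (if i ∈ u.1 then f u else 0) -
      (if j ∈ u.1 then f u else 0) + 2 * (if u = pairVertex h then f u else 0) := by
    intro u
    simp only [kneserGraph_adj_pairVertex_iff, eq_pairVertex_iff]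
    by_cases hi : i ∈ u.1 <;> by_cases hj : j ∈ u.1 <;> simp [hi, hj]; ring
  rw [SimpleGraph.neighborFinset_eq_filter, sum_filter]
  have := sum_congr rfl fun u (_ : u ∈ univ) => key u
  simp only [sum_add_distrib, sum_sub_distrib, ← mul_sum, sum_ite_eq', mem_univ, if_true] at this
  simp only [starSum]
  linarith

theorem isSRDF_kneserGraph_two_iff (f : {s : Finset (Fin n) // s.card = 2} → ℤ) :
    IsSRDF (kneserGraph n 2) f ↔ (∀ v, f v = -1 ∨ f v = 1 ∨ f v = 2) ∧
      (∀ v, f v = -1 → ∃ u, (kneserGraph n 2).Adj v u ∧ f u = 2) ∧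
      ∀ i j, i ≠ j → starSum f i + starSum f j ≤ ∑ v, f v - 1 + 2 * pairValue f i j := by
  rw [isSRDF_iff_neighborFinset]
  refine and_congr_right fun _ => and_congr_right fun _ => ⟨fun h i j hij => ?_, fun h v => ?_⟩
  · have := h (pairVertex hij)
    rw [closedNbhd_sum_pairVertex] at this
    rw [pairValue, dif_neg hij]
    linarith
  · obtain ⟨i, j, hij, rfl⟩ := exists_eq_pairVertex v
    have := h i j hij
    rw [pairValue, dif_neg hij] at this
    rw [closedNbhd_sum_pairVertex]
    linarith

theorem starSum_mul_le (f : {s : Finset (Fin n) // s.card = 2} → ℤ)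
    (hkey : ∀ i j, i ≠ j → starSum f i + starSum f j ≤ ∑ v, f v - 1 + 2 * pairValue f i j)
    (i : Fin n) : (n - 4 : ℤ) * starSum f i ≤ (n - 3) * ∑ v, f v - (n - 1) := by
  have hsum := sum_le_sum fun j (hj : j ∈ univ.erase i) => hkey i j (ne_of_mem_erase hj).symm
  have hcard : ((univ.erase i).card : ℤ) = n - 1 := by
    rw [card_erase_of_mem (mem_univ i), card_univ, Fintype.card_fin, Nat.cast_sub i.pos]; simp
  have hothers : ∑ j ∈ univ.erase i, starSum f j = 2 * ∑ v, f v - starSum f i := by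
    have := sum_starSum f
    rw [← add_sum_erase _ _ (mem_univ i)] at this
    push_cast at this
    linarith
  have hrow : ∑ j ∈ univ.erase i, pairValue f i j = starSum f i := by
    rw [starSum_eq_sum_pairValue, sum_erase]
    simp [pairValue]
  rw [sum_add_distrib, sum_add_distrib, sum_const, sum_const, hothers, ← mul_sum, hrow,
    nsmul_eq_mul, nsmul_eq_mul, hcard] at hsum
  linarith

end Pairs

theorem four_le_sum_of_starSum_add_le (f : {s : Finset (Fin 10) // s.card = 2} → ℤ)
    (hval : ∀ v, f v = -1 ∨ f v = 1 ∨ f v = 2)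
    (hkey : ∀ i j, i ≠ j → starSum f i + starSum f j ≤ ∑ v, f v - 1 + 2 * pairValue f i j) :
    4 ≤ ∑ v, f v := by
  set W := ∑ v, f v
  by_contra! hW
  have hdeg (i : Fin 10) : 6 * starSum f i ≤ 7 * W - 9 := by
    have := starSum_mul_le f hkey i
    push_cast at this
    linarith
  have htotal : ∑ i, starSum f i = 2 * W := by simpa using sum_starSum f
  have hWpos : 0 < W := by
    have := sum_le_sum fun i (_ : i ∈ univ) => hdeg i
    simp only [← mul_sum, htotal, sum_const, card_univ, Fintype.card_fin, nsmul_eq_mul] at this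
    push_cast at this
    linarith
  obtain ⟨i, -, hmax⟩ := exists_max_image univ (starSum f) univ_nonempty
  set M := starSum f i
  have hM : M ≤ 2 := by linarith [hdeg i]
  set T := univ.filter fun j => pairValue f i j = -1
  have hT : 9 - 2 * (#T : ℤ) ≤ M := by
    have hrow (j : Fin 10) :
        1 - 2 * (if j ∈ T then 1 else 0) - (if j = i then 1 else 0) ≤ pairValue f i j := by
      by_cases hji : j = i
      · simp [T, hji]
      · have : pairValue f i j = -1 ∨ pairValue f i j = 1 ∨ pairValue f i j = 2 := by
          rw [pairValue, dif_neg (Ne.symm hji)]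
          exact hval _
        simp only [T, mem_filter, mem_univ, true_and, hji, if_false]
        split_ifs <;> omega
    have := sum_le_sum fun j (_ : j ∈ univ) => hrow j
    rw [← starSum_eq_sum_pairValue] at this
    simp only [mul_ite, mul_one, mul_zero, sum_sub_distrib, sum_const, card_univ, Fintype.card_fin,
      Int.nsmul_eq_mul, Nat.cast_ofNat, sum_ite_mem, univ_inter, sum_ite_eq', mem_univ, ↓reduceIte,
      tsub_le_iff_right] at this
    linarith
  have hTstar : ∀ j ∈ T, starSum f j ≤ -M := by
    intro j hj
    have hij : i ≠ j := by rintro rfl; simp [T] at hj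
    have := hkey i j hij
    rw [(mem_filter.1 hj).2] at this
    linarith
  have hMpos : 0 < M := by
    have := sum_le_card_nsmul univ (starSum f) M fun j _ => hmax j (mem_univ j)
    simp only [htotal, card_univ, Fintype.card_fin, nsmul_eq_mul] at this
    push_cast at this
    linarith
  have hbound : 2 * W ≤ 10 * M - 2 * M * #T := by
    have := sum_le_sum fun j (_ : j ∈ univ) =>
      show starSum f j ≤ M - 2 * M * (if j ∈ T then 1 else 0) by
        split_ifs with hj
        · linarith [hTstar j hj]
        · linarith [hmax j (mem_univ j)]
    simp only [htotal, mul_ite, mul_one, mul_zero, sum_sub_distrib, sum_const, card_univ,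
      Fintype.card_fin, Int.nsmul_eq_mul, Nat.cast_ofNat, sum_ite_mem, univ_inter] at this
    linarith
  have hT4 : 4 ≤ (#T : ℤ) := by omega
  nlinarith [hdeg i]

section Witness

set_option maxRecDepth 10000

/-- With `A = {0, …, 5}`, `B = {6, …, 9}` and the blocks `{2m, 2m + 1}`: pairs meeting both `A` and
`B` get `-1`, block pairs inside `A` and non-block pairs inside `B` get `2`, all other pairs get `1`.
Then `s i = 2` on `A` and `s i = -1` on `B`. -/
def witness (v : {s : Finset (Fin 10) // s.card = 2}) : ℤ :=
  if (v.1.filter (· < 6)).card = 1 then -1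
  else if ((v.1.filter (· < 6)).card = 2 ↔ (v.1.image (· / 2)).card = 1) then 2 else 1

theorem sum_witness : ∑ v, witness v = 4 := by decide

theorem starSum_witness (i : Fin 10) : starSum witness i = if i < 6 then 2 else -1 := by
  revert i; decide

theorem isSRDF_witness : IsSRDF (kneserGraph 10 2) witness := by
  refine (isSRDF_kneserGraph_two_iff witness).2 ⟨by decide, by decide, ?_⟩
  simp only [starSum_witness, sum_witness]
  decide

end Witness

theorem kneser102_signedRomanDomNum : signedRomanDomNum (kneserGraph 10 2) = 4 := by
  refine IsLeast.csInf_eq ⟨⟨witness, isSRDF_witness, sum_witness⟩, ?_⟩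
  rintro w ⟨f, hf, rfl⟩
  obtain ⟨hval, -, hkey⟩ := (isSRDF_kneserGraph_two_iff f).1 hf
  exact four_le_sum_of_starSum_add_le f hval hkey
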